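/- arXiv:1709.08560 — 2 statements merged into one kernel-verified Lean document; each statement's English description precedes it below -/
import Mathlib

section
/- Let R be a commutative domain with field of fractions Q, and let M be a finitely generated torsion R-module over a PID R. Suppose B : M × M → Q/R is a sesquilinear, nonsingular pairing (with respect to an involution on R), and suppose P ⊆ M is a submodule with P = P^⊥ := {x ∈ M : B(x,y) = 0 for all y ∈ P}. Then the sequence 0 → P → M → Hom_R(P, Q/R) → 0, where the second map sends x to (y ↦ B(x,y)), is exact. -/
/-! Since `P = P^⊥`, the kernel of `x ↦ B(x, ·)|_P` is `P`. For surjectivity, a `star`-semilinear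
map `P → Q/R` is an `R`-linear map into `Q/R` with scalars acting through `star`; that module is
still divisible, hence injective over a PID by Baer's criterion, so the map extends to `M`, and
nonsingularity of `B` represents the extension as `B(x, ·)`. -/

/-- `N` with `r : R` acting as `σ r`, so that `σ`-semilinear maps into `N` become linear maps. -/
def ScalarTwist {R : Type*} [Semiring R] (_σ : R →+* R) (N : Type*) : Type _ := N

namespace ScalarTwist

variable {R : Type*} [Semiring R] (σ : R →+* R) (N : Type*) [AddCommGroup N] [Module R N]

instance : AddCommGroup (ScalarTwist σ N) := inferInstanceAs (AddCommGroup N)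

instance : Module R (ScalarTwist σ N) := Module.compHom N σ

variable {σ N} {M : Type*} [AddCommGroup M] [Module R M]

def ofSemilinearMap (f : M →ₛₗ[σ] N) : M →ₗ[R] ScalarTwist σ N where
  toFun := f
  map_add' := f.map_add
  map_smul' := f.map_smulₛₗ

def toSemilinearMap (f : M →ₗ[R] ScalarTwist σ N) : M →ₛₗ[σ] N where
  toFun := f
  map_add' := f.map_add
  map_smul' := f.map_smul

end ScalarTwist

theorem Module.Baer.of_exists_smul_eq {R : Type*} [CommRing R] [IsPrincipalIdealRing R]
    {N : Type*} [AddCommGroup N] [Module R N] (hN : ∀ a : R, a ≠ 0 → ∀ z : N, ∃ w, a • w = z) :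
    Module.Baer R N := by
  intro I g
  obtain ⟨a, rfl⟩ := (IsPrincipalIdealRing.principal I).principal
  by_cases ha : a = 0
  · subst ha
    refine ⟨0, fun x hx => ?_⟩
    obtain rfl : x = 0 := by simpa using hx
    exact (map_zero g).symm
  obtain ⟨w, hw⟩ := hN a ha (g ⟨a, Submodule.mem_span_singleton_self a⟩)
  refine ⟨LinearMap.toSpanSingleton R N w, fun x hx => ?_⟩
  obtain ⟨r, rfl⟩ := Submodule.mem_span_singleton.mp hx
  have hra : (⟨r • a, hx⟩ : Submodule.span R {a}) = r • ⟨a, Submodule.mem_span_singleton_self a⟩ :=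
    rfl
  rw [hra, map_smul, map_smul, LinearMap.toSpanSingleton_apply, hw]

theorem exists_smul_eq_of_isFractionRing (R : Type*) [CommRing R] [IsDomain R]
    (K : Type*) [Field K] [Algebra R K] [IsFractionRing R K] (a : R) (ha : a ≠ 0)
    (z : K ⧸ LinearMap.range (Algebra.linearMap R K)) : ∃ w, a • w = z := by
  obtain ⟨q, rfl⟩ := Submodule.Quotient.mk_surjective _ z
  refine ⟨Submodule.Quotient.mk ((algebraMap R K a)⁻¹ * q), ?_⟩
  rw [← Submodule.Quotient.mk_smul, Algebra.smul_def, ← mul_assoc,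
    mul_inv_cancel₀ (IsFractionRing.to_map_ne_zero_of_mem_nonZeroDivisors
      (mem_nonZeroDivisors_of_ne_zero ha)), one_mul]

theorem SemilinearMap.exists_extension_of_exists_smul_eq {R : Type*} [CommRing R]
    [IsPrincipalIdealRing R] {σ : R →+* R} (hσ : Function.Injective σ)
    {N : Type*} [AddCommGroup N] [Module R N] (hN : ∀ a : R, a ≠ 0 → ∀ z : N, ∃ w, a • w = z)
    {M : Type*} [AddCommGroup M] [Module R M] (P : Submodule R M) (f : P →ₛₗ[σ] N) :
    ∃ F : M →ₛₗ[σ] N, ∀ y : P, F y = f y := by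
  have hbaer : Module.Baer R (ScalarTwist σ N) := Module.Baer.of_exists_smul_eq
    fun a ha z => hN (σ a) ((map_ne_zero_iff σ hσ).mpr ha) z
  obtain ⟨F, hF⟩ := hbaer.extension_property P.subtype P.injective_subtype
    (ScalarTwist.ofSemilinearMap f)
  exact ⟨ScalarTwist.toSemilinearMap F, fun y => LinearMap.congr_fun hF y⟩

open scoped Classical

theorem metaboliser_exact_sequence_general
    (R : Type*) [CommRing R] [StarRing R] [IsDomain R] [IsPrincipalIdealRing R]
    (M : Type*) [AddCommGroup M] [Module R M]
    -- Q/R :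
    (B : M → M → ((FractionRing R) ⧸ LinearMap.range (Algebra.linearMap R (FractionRing R))))
    -- nonsingularity: the adjoint x ↦ B(x,·) is injective and surjects onto the
    -- star-semilinear maps M → Q/R :
    (hsurj : ∀ f : M →ₛₗ[starRingEnd R]
        ((FractionRing R) ⧸ LinearMap.range (Algebra.linearMap R (FractionRing R))),
        ∃ x, ∀ y, B x y = f y)
    -- the metaboliser P = P^⊥ :
    (P : Submodule R M)
    (hP : ∀ x, x ∈ P ↔ ∀ y ∈ P, B x y = 0) :
    -- exactness of 0 → P → M → Hom(P, Q/R) → 0 :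
    (Function.Injective (P.subtype)) ∧
    (∀ x : M, (∀ y : P, B x (y : M) = 0) ↔ x ∈ P) ∧
    (∀ f : P →ₛₗ[starRingEnd R]
        ((FractionRing R) ⧸ LinearMap.range (Algebra.linearMap R (FractionRing R))),
        ∃ x : M, ∀ y : P, B x (y : M) = f y) := by
  refine ⟨P.injective_subtype, fun x => Subtype.forall.trans (hP x).symm, fun f => ?_⟩
  obtain ⟨F, hF⟩ := SemilinearMap.exists_extension_of_exists_smul_eq star_injective
    (exists_smul_eq_of_isFractionRing R (FractionRing R)) P f
  obtain ⟨x, hx⟩ := hsurj F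
  exact ⟨x, fun y => (hx y).trans (hF y)⟩

theorem metaboliser_exact_sequence
    (R : Type*) [CommRing R] [StarRing R] [IsDomain R] [IsPrincipalIdealRing R]
    (M : Type*) [AddCommGroup M] [Module R M] [Module.Finite R M]
    (htor : Module.IsTorsion R M)
    -- Q/R :
    (B : M → M → ((FractionRing R) ⧸ LinearMap.range (Algebra.linearMap R (FractionRing R))))
    (haddl : ∀ x x' y, B (x + x') y = B x y + B x' y)
    (haddr : ∀ x y y', B x (y + y') = B x y + B x y')
    (hsmull : ∀ (r : R) x y, B (r • x) y = r • B x y)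
    (hsmulr : ∀ (s : R) x y, B x (s • y) = (star s) • B x y)
    -- nonsingularity: the adjoint x ↦ B(x,·) is injective and surjects onto the
    -- star-semilinear maps M → Q/R :
    (hinj : ∀ x, (∀ y, B x y = 0) → x = 0)
    (hsurj : ∀ f : M →ₛₗ[starRingEnd R]
        ((FractionRing R) ⧸ LinearMap.range (Algebra.linearMap R (FractionRing R))),
        ∃ x, ∀ y, B x y = f y)
    -- the metaboliser P = P^⊥ :
    (P : Submodule R M)
    (hP : ∀ x, x ∈ P ↔ ∀ y ∈ P, B x y = 0) :
    -- exactness of 0 → P → M → Hom(P, Q/R) → 0 :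
    (Function.Injective (P.subtype)) ∧
    (∀ x : M, (∀ y : P, B x (y : M) = 0) ↔ x ∈ P) ∧
    (∀ f : P →ₛₗ[starRingEnd R]
        ((FractionRing R) ⧸ LinearMap.range (Algebra.linearMap R (FractionRing R))),
        ∃ x : M, ∀ y : P, B x (y : M) = f y) :=
  metaboliser_exact_sequence_general R M B hsurj P hP
end

section
/- Let R be a PID with involution, Q its quotient field, and M a finitely generated torsion R-module with a nonsingular sesquilinear pairing B : M × M → Q/R admitting a metaboliser P (a submodule with P = P^⊥). Then the order ideal of M factors as ord(M) = ord(P) · overline{ord(P)}; in particular ord(M) = f · f̄ for some f ∈ R. -/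
/-!
Pairing against `P` identifies `M ⧸ P` with the conjugate-linear dual `Hom(P, Q/R)`: the kernel
of `x ↦ B x (restricted to P)` is `P^⊥ = P`, and the map is onto because `Q/R` is divisible,
hence injective over a PID, and `B` is nonsingular. If `A'` presents the torsion module `P`,
then `det A' ≠ 0` and this dual is presented by the conjugate transpose `A'ᴴ`. Gluing the
presentations of `P` and `M ⧸ P` presents `M` by a block upper triangular matrix with diagonal
blocks `A'` and `A'ᴴ`, and the determinant of a square presentation matrix depends, up to a
unit, only on the module.
-/

open scoped Matrix

abbrev Matrix.cokernel {R : Type*} [CommRing R] {m n : Type*} [Fintype n] [DecidableEq n]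
    (A : Matrix m n R) : Type _ :=
  (m → R) ⧸ LinearMap.range A.toLin'

namespace Matrix

variable {R : Type*} [CommRing R] {ι ι' κ κ' : Type*} [Fintype ι] [DecidableEq ι]
  [Fintype ι'] [DecidableEq ι']

theorem cokernel_mk_eq_zero_iff (A : Matrix κ ι R) (w : κ → R) :
    (Submodule.Quotient.mk w : A.cokernel) = 0 ↔ ∃ u, A *ᵥ u = w := by
  simp [Submodule.Quotient.mk_eq_zero, toLin'_apply]

theorem exists_mul_eq_of_cokernel_mk_eq_zero {C : Matrix κ ι R} {E : Matrix κ ι' R}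
    (h : ∀ w, (Submodule.Quotient.mk (E *ᵥ w) : C.cokernel) = 0) :
    ∃ U : Matrix ι ι' R, C * U = E := by
  have hE : ∀ w, E.toLin' w ∈ LinearMap.range C.toLin' := fun w =>
    (Submodule.Quotient.mk_eq_zero _).mp (h w)
  obtain ⟨U, hU⟩ := Module.projective_lifting_property C.toLin'.rangeRestrict
    (E.toLin'.codRestrict _ hE) C.toLin'.surjective_rangeRestrict
  refine ⟨LinearMap.toMatrix' U, toLin'.injective ?_⟩
  rw [toLin'_mul, toLin'_toMatrix']
  exact LinearMap.ext fun w => congr_arg Subtype.val (LinearMap.congr_fun hU w)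

theorem exists_mulVec_lift [Fintype κ] [DecidableEq κ] {A : Matrix κ ι R} {C : Matrix κ' ι' R}
    (f : A.cokernel →ₗ[R] C.cokernel) :
    ∃ P : Matrix κ' κ R,
      ∀ w, f (Submodule.Quotient.mk w) = Submodule.Quotient.mk (P *ᵥ w) := by
  obtain ⟨h, hh⟩ := Module.projective_lifting_property (LinearMap.range C.toLin').mkQ
    (f ∘ₗ (LinearMap.range A.toLin').mkQ) (Submodule.mkQ_surjective _)
  refine ⟨LinearMap.toMatrix' h, fun w => ?_⟩
  rw [← toLin'_apply, toLin'_toMatrix']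
  exact (LinearMap.congr_fun hh w).symm

theorem det_associated_of_cokernel_equiv [IsDomain R] (A : Matrix ι ι R) (C : Matrix ι' ι' R)
    (e : A.cokernel ≃ₗ[R] C.cokernel) : Associated A.det C.det := by
  obtain ⟨P, hP⟩ := exists_mulVec_lift (e : A.cokernel →ₗ[R] C.cokernel)
  obtain ⟨Q, hQ⟩ := exists_mulVec_lift (e.symm : C.cokernel →ₗ[R] A.cokernel)
  have hA : ∀ u, (Submodule.Quotient.mk (A *ᵥ u) : A.cokernel) = 0 := fun u =>
    (cokernel_mk_eq_zero_iff A _).mpr ⟨u, rfl⟩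
  have hC : ∀ u, (Submodule.Quotient.mk (C *ᵥ u) : C.cokernel) = 0 := fun u =>
    (cokernel_mk_eq_zero_iff C _).mpr ⟨u, rfl⟩
  obtain ⟨U, hU⟩ : ∃ U, C * U = P * A := exists_mul_eq_of_cokernel_mk_eq_zero fun w => by
    rw [← mulVec_mulVec, ← LinearEquiv.coe_coe, ← hP, hA, map_zero]
  obtain ⟨V, hV⟩ : ∃ V, A * V = Q * C := exists_mul_eq_of_cokernel_mk_eq_zero fun w => by
    rw [← mulVec_mulVec, ← LinearEquiv.coe_coe, ← hQ, hC, map_zero]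
  obtain ⟨S, hS⟩ : ∃ S, A * S = Q * P - 1 := exists_mul_eq_of_cokernel_mk_eq_zero fun w => by
    rw [sub_mulVec, ← mulVec_mulVec, one_mulVec, Submodule.Quotient.mk_sub, ← hQ, ← hP]
    simp only [LinearEquiv.coe_coe, LinearEquiv.symm_apply_apply, sub_self]
  obtain ⟨T, hT⟩ : ∃ T, C * T = P * Q - 1 := exists_mul_eq_of_cokernel_mk_eq_zero fun w => by
    rw [sub_mulVec, ← mulVec_mulVec, one_mulVec, Submodule.Quotient.mk_sub, ← hP, ← hQ]
    simp only [LinearEquiv.coe_coe, LinearEquiv.apply_symm_apply, sub_self]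
  have hAC : fromBlocks A Q 0 1 * fromBlocks (-S) (-V) P C = fromBlocks 1 0 P C := by
    simp [fromBlocks_multiply, hS, hV]
  have hCA : fromBlocks 1 0 P C * fromBlocks A Q (-U) (-T) = fromBlocks A Q 0 1 := by
    simp [fromBlocks_multiply, hU, hT]
  refine associated_of_dvd_dvd ⟨(fromBlocks (-S) (-V) P C).det, ?_⟩
    ⟨(fromBlocks A Q (-U) (-T)).det, ?_⟩
  · simpa [det_fromBlocks_zero₂₁, det_fromBlocks_zero₁₂] using (congr_arg det hAC).symm
  · simpa [det_fromBlocks_zero₂₁, det_fromBlocks_zero₁₂] using (congr_arg det hCA).symm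

theorem det_ne_zero_of_injective_cokernel [IsDomain R] {A : Matrix ι ι R} {M : Type*}
    [AddCommGroup M] [Module R M] (htor : Module.IsTorsion R M)
    (f : A.cokernel →ₗ[R] M) (hf : Function.Injective f) : A.det ≠ 0 := by
  intro hdet
  obtain ⟨v, hv, hvA⟩ := exists_vecMul_eq_zero_iff.mpr hdet
  obtain ⟨i, hi⟩ := Function.ne_iff.mp hv
  obtain ⟨a, ha⟩ := @htor (f (Submodule.Quotient.mk (Pi.single i 1)))
  have hmk : (Submodule.Quotient.mk ((a : R) • Pi.single i 1) : A.cokernel) = 0 := by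
    apply hf
    rw [Submodule.Quotient.mk_smul, map_smul, map_zero]
    exact ha
  obtain ⟨u, hu⟩ := (cokernel_mk_eq_zero_iff A _).mp hmk
  have hvu : v ⬝ᵥ (A *ᵥ u) = v i * a := by
    simp [hu, dotProduct_single, mul_comm]
  rw [dotProduct_mulVec, hvA, zero_dotProduct] at hvu
  exact nonZeroDivisors.ne_zero a.2 ((mul_eq_zero.mp hvu.symm).resolve_left hi)

theorem exists_fromBlocks_cokernel_equiv [Fintype κ'] {M : Type*} [AddCommGroup M] [Module R M]
    (N : Submodule R M) (A₁ : Matrix κ ι R) (A₂ : Matrix κ' ι' R)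
    (e₁ : A₁.cokernel ≃ₗ[R] N) (e₂ : A₂.cokernel ≃ₗ[R] M ⧸ N) :
    ∃ D : Matrix κ ι' R, Nonempty ((fromBlocks A₁ D 0 A₂).cokernel ≃ₗ[R] M) := by
  set p₁ : (κ → R) →ₗ[R] N := e₁ ∘ₗ (LinearMap.range A₁.toLin').mkQ
  have hp₁ : Function.Surjective p₁ := e₁.surjective.comp (Submodule.mkQ_surjective _)
  have hp₁_eq_zero : ∀ w, p₁ w = 0 ↔ ∃ u, A₁ *ᵥ u = w := fun w => by simp [p₁]
  obtain ⟨g₂, hg₂⟩ := Module.projective_lifting_property N.mkQ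
    (e₂ ∘ₗ (LinearMap.range A₂.toLin').mkQ) (Submodule.mkQ_surjective _)
  have hg₂_surj : Function.Surjective (N.mkQ ∘ₗ g₂) := by
    rw [hg₂]
    exact e₂.surjective.comp (Submodule.mkQ_surjective _)
  have hg₂_eq_zero : ∀ w, N.mkQ (g₂ w) = 0 ↔ ∃ u, A₂ *ᵥ u = w := fun w => by
    simp [← LinearMap.comp_apply, hg₂]
  -- the relations `A₂` of `M ⧸ N`, lifted to `M` along `g₂`, land in `N`;
  -- `D` expresses them there
  obtain ⟨h, hh⟩ := Module.projective_lifting_property p₁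
    ((-(g₂ ∘ₗ A₂.toLin')).codRestrict N fun u => by
      simpa [← Submodule.Quotient.mk_eq_zero] using (hg₂_eq_zero _).mpr ⟨u, rfl⟩) hp₁
  set D := LinearMap.toMatrix' h
  have hD : ∀ u, (p₁ (D *ᵥ u) : M) = -g₂ (A₂ *ᵥ u) := fun u => by
    rw [← toLin'_apply, toLin'_toMatrix', ← LinearMap.comp_apply, hh]
    simp
  set G : ((κ ⊕ κ') → R) →ₗ[R] M :=
    N.subtype ∘ₗ p₁ ∘ₗ LinearMap.funLeft R R Sum.inl +
      g₂ ∘ₗ LinearMap.funLeft R R Sum.inr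
  have hG : ∀ a b, G (Sum.elim a b) = p₁ a + g₂ b := fun _ _ => rfl
  have hG_surj : Function.Surjective G := by
    intro x
    obtain ⟨b, hb⟩ := hg₂_surj (N.mkQ x)
    obtain ⟨a, ha⟩ := hp₁ ⟨x - g₂ b, (Submodule.Quotient.eq N).mp hb.symm⟩
    exact ⟨Sum.elim a b, by rw [hG, ha, sub_add_cancel]⟩
  have hG_ker : LinearMap.ker G = LinearMap.range (fromBlocks A₁ D 0 A₂).toLin' := by
    apply le_antisymm
    · intro z hz
      rw [← Sum.elim_comp_inl_inr z] at hz ⊢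
      generalize z ∘ Sum.inl = a, z ∘ Sum.inr = b at hz ⊢
      rw [LinearMap.mem_ker, hG] at hz
      obtain ⟨s, rfl⟩ := (hg₂_eq_zero b).mp <| by
        rw [Submodule.mkQ_apply, Submodule.Quotient.mk_eq_zero, eq_neg_of_add_eq_zero_right hz]
        exact neg_mem (p₁ a).2
      obtain ⟨t, ht⟩ := (hp₁_eq_zero (a - D *ᵥ s)).mp <| Subtype.ext <| by
        rw [map_sub, Submodule.coe_sub, hD, sub_neg_eq_add, hz, ZeroMemClass.coe_zero]
      exact ⟨Sum.elim t s, by simp [toLin'_apply, fromBlocks_mulVec, ht]⟩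
    · rintro _ ⟨y, rfl⟩
      rw [← Sum.elim_comp_inl_inr y]
      generalize y ∘ Sum.inl = t, y ∘ Sum.inr = s
      have hA₁ : p₁ (A₁ *ᵥ t) = 0 := (hp₁_eq_zero _).mpr ⟨t, rfl⟩
      simp [toLin'_apply, fromBlocks_mulVec, hG, hA₁, hD]
  exact ⟨D, ⟨(Submodule.quotEquivOfEq _ _ hG_ker.symm).trans
    (G.quotKerEquivOfSurjective hG_surj)⟩⟩

end Matrix

theorem Module.Baer.of_smul_surjective {R : Type*} [CommRing R] [IsPrincipalIdealRing R] {N : Type*} [AddCommGroup N] [Module R N]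
    (hN : ∀ a : R, a ≠ 0 → Function.Surjective fun d : N => a • d) : Module.Baer R N := by
  intro I g
  obtain ⟨a, rfl⟩ := (IsPrincipalIdealRing.principal I).principal
  by_cases ha : a = 0
  · subst ha
    refine ⟨0, fun x hx => ?_⟩
    obtain rfl := Ideal.mem_span_singleton.mp hx |> zero_dvd_iff.mp
    exact (map_zero g).symm
  · obtain ⟨d, hd⟩ := hN a ha (g ⟨a, Ideal.mem_span_singleton_self a⟩)
    refine ⟨LinearMap.toSpanSingleton R N d, fun x hx => ?_⟩
    obtain ⟨c, rfl⟩ := Ideal.mem_span_singleton'.mp hx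
    have hca : (⟨c * a, hx⟩ : Ideal.span {a}) =
        c • ⟨a, Ideal.mem_span_singleton_self a⟩ := rfl
    rw [hca, map_smul, ← hd, LinearMap.toSpanSingleton_apply, mul_smul]

/-- `N` with `r` acting as `star r`: `star`-semilinear maps into `N` are linear maps into
`ConjModule N`. -/
def ConjModule (N : Type*) : Type _ := N

instance (N : Type*) [AddCommGroup N] : AddCommGroup (ConjModule N) := ‹AddCommGroup N›

instance (R N : Type*) [CommRing R] [StarRing R] [AddCommGroup N] [Module R N] :
    Module R (ConjModule N) :=
  Module.compHom N (starRingEnd R)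

theorem LinearMap.exists_extension_of_smul_surjective {R : Type*} [CommRing R] [StarRing R]
    [IsPrincipalIdealRing R] {N : Type*} [AddCommGroup N] [Module R N]
    (hN : ∀ a : R, a ≠ 0 → Function.Surjective fun d : N => a • d)
    {X M : Type*} [AddCommGroup X] [Module R X] [AddCommGroup M] [Module R M]
    (i : X →ₗ[R] M) (hi : Function.Injective i) (f : X →ₛₗ[starRingEnd R] N) :
    ∃ F : M →ₛₗ[starRingEnd R] N, F ∘ₛₗ i = f := by
  have hbaer : Module.Baer R (ConjModule N) := Module.Baer.of_smul_surjective fun a ha =>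
    hN (star a) (star_ne_zero.mpr ha)
  obtain ⟨F, hF⟩ := hbaer.extension_property i hi
    { toFun := fun x => (f x : ConjModule N), map_add' := f.map_add, map_smul' := f.map_smulₛₗ }
  exact ⟨{ toFun := fun x => (F x : N), map_add' := F.map_add, map_smul' := F.map_smul },
    LinearMap.ext fun x => LinearMap.congr_fun hF x⟩

abbrev FractionRingQuot (R : Type*) [CommRing R] : Type _ :=
  FractionRing R ⧸ LinearMap.range (Algebra.linearMap R (FractionRing R))

namespace FractionRingQuot

variable {R ι : Type*} [CommRing R]

theorem smul_surjective [IsDomain R] {a : R} (ha : a ≠ 0) :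
    Function.Surjective fun d : FractionRingQuot R => a • d := by
  intro z
  obtain ⟨q, rfl⟩ := Submodule.Quotient.mk_surjective _ z
  refine ⟨Submodule.Quotient.mk ((algebraMap R (FractionRing R) a)⁻¹ * q), ?_⟩
  dsimp only
  rw [← Submodule.Quotient.mk_smul, Algebra.smul_def, ← mul_assoc,
    mul_inv_cancel₀ (IsFractionRing.to_map_eq_zero_iff.not.mpr ha), one_mul]

theorem compLeft_mkQ_eq_zero_iff (x : ι → FractionRing R) :
    (LinearMap.range (Algebra.linearMap R (FractionRing R))).mkQ.compLeft ι x = 0 ↔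
      ∃ w : ι → R, algebraMap R (FractionRing R) ∘ w = x := by
  simp only [funext_iff, LinearMap.compLeft_apply, Function.comp_apply, Submodule.mkQ_apply,
    Pi.zero_apply, Submodule.Quotient.mk_eq_zero, LinearMap.mem_range, Algebra.linearMap_apply]
  exact Classical.skolem

end FractionRingQuot

namespace Matrix

variable {R : Type*} [CommRing R] {ι κ : Type*} [Fintype ι]

def toLinOn (N : Type*) [AddCommGroup N] [Module R N] (C : Matrix κ ι R) :
    (ι → N) →ₗ[R] (κ → N) :=
  LinearMap.pi fun j => ∑ i, C j i • LinearMap.proj i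

@[simp]
theorem toLinOn_apply {N : Type*} [AddCommGroup N] [Module R N] (C : Matrix κ ι R)
    (v : ι → N) (j : κ) : C.toLinOn N v j = ∑ i, C j i • v i := by
  simp [toLinOn]

theorem toLinOn_compLeft_mkQ (C : Matrix κ ι R) (x : ι → FractionRing R) :
    C.toLinOn (FractionRingQuot R)
        ((LinearMap.range (Algebra.linearMap R (FractionRing R))).mkQ.compLeft ι x) =
      (LinearMap.range (Algebra.linearMap R (FractionRing R))).mkQ.compLeft κ
        (C.map (algebraMap R (FractionRing R)) *ᵥ x) := by
  funext j
  simp [mulVec, dotProduct, ← Submodule.Quotient.mk_smul, Algebra.smul_def]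

theorem map_algebraMap_mulVec (C : Matrix κ ι R) (u : ι → R) :
    C.map (algebraMap R (FractionRing R)) *ᵥ (algebraMap R (FractionRing R) ∘ u) =
      algebraMap R (FractionRing R) ∘ (C *ᵥ u) :=
  funext fun i => (RingHom.map_mulVec _ C u i).symm

variable [DecidableEq ι]

theorem inv_mulVec_eq_iff {K : Type*} [CommRing K] {A : Matrix ι ι K} (hA : IsUnit A.det)
    {x y : ι → K} : A⁻¹ *ᵥ y = x ↔ A *ᵥ x = y := by
  constructor <;> rintro rfl <;> simp [mulVec_mulVec, mul_nonsing_inv _ hA, nonsing_inv_mul _ hA]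

theorem isUnit_det_map_algebraMap [IsDomain R] {C : Matrix ι ι R} (hC : C.det ≠ 0) :
    IsUnit (C.map (algebraMap R (FractionRing R))).det := by
  rw [isUnit_iff_ne_zero, ← RingHom.mapMatrix_apply, ← RingHom.map_det]
  exact IsFractionRing.to_map_eq_zero_iff.not.mpr hC

noncomputable def invMulVecQuot (C : Matrix ι ι R) :
    (ι → R) →ₗ[R] (ι → FractionRingQuot R) :=
  (LinearMap.range (Algebra.linearMap R (FractionRing R))).mkQ.compLeft ι ∘ₗ
    ((C.map (algebraMap R (FractionRing R)))⁻¹.mulVecLin.restrictScalars R) ∘ₗ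
      (Algebra.linearMap R (FractionRing R)).compLeft ι

theorem invMulVecQuot_apply (C : Matrix ι ι R) (w : ι → R) :
    C.invMulVecQuot w = (LinearMap.range (Algebra.linearMap R (FractionRing R))).mkQ.compLeft ι
      ((C.map (algebraMap R (FractionRing R)))⁻¹ *ᵥ (algebraMap R (FractionRing R) ∘ w)) :=
  rfl

theorem ker_invMulVecQuot [IsDomain R] {C : Matrix ι ι R} (hC : C.det ≠ 0) :
    LinearMap.ker C.invMulVecQuot = LinearMap.range C.toLin' := by
  have hinj : Function.Injective (algebraMap R (FractionRing R) ∘ · : (ι → R) → _) :=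
    (IsFractionRing.injective R (FractionRing R)).comp_left
  ext w
  rw [LinearMap.mem_ker, invMulVecQuot_apply, FractionRingQuot.compLeft_mkQ_eq_zero_iff,
    LinearMap.mem_range]
  refine exists_congr fun u => ?_
  rw [toLin'_apply, ← hinj.eq_iff, ← map_algebraMap_mulVec, eq_comm,
    inv_mulVec_eq_iff (isUnit_det_map_algebraMap hC)]

theorem range_invMulVecQuot [IsDomain R] {C : Matrix ι ι R} (hC : C.det ≠ 0) :
    LinearMap.range C.invMulVecQuot = LinearMap.ker (C.toLinOn (FractionRingQuot R)) := by
  have hunit := isUnit_det_map_algebraMap hC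
  ext v
  constructor
  · rintro ⟨w, rfl⟩
    rw [LinearMap.mem_ker, invMulVecQuot_apply, toLinOn_compLeft_mkQ, mulVec_mulVec,
      mul_nonsing_inv _ hunit, one_mulVec, FractionRingQuot.compLeft_mkQ_eq_zero_iff]
    exact ⟨w, rfl⟩
  · intro hv
    obtain ⟨x, rfl⟩ : ∃ x,
        (LinearMap.range (Algebra.linearMap R (FractionRing R))).mkQ.compLeft ι x = v :=
      ⟨fun i => (Submodule.Quotient.mk_surjective _ (v i)).choose,
        funext fun i => (Submodule.Quotient.mk_surjective _ (v i)).choose_spec⟩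
    rw [LinearMap.mem_ker, toLinOn_compLeft_mkQ, FractionRingQuot.compLeft_mkQ_eq_zero_iff] at hv
    obtain ⟨w, hw⟩ := hv
    exact ⟨w, by rw [invMulVecQuot_apply, (inv_mulVec_eq_iff hunit).mpr hw.symm]⟩

noncomputable def cokernelEquivKerToLinOn [IsDomain R] {C : Matrix ι ι R} (hC : C.det ≠ 0) :
    C.cokernel ≃ₗ[R] LinearMap.ker (C.toLinOn (FractionRingQuot R)) :=
  (Submodule.quotEquivOfEq _ _ (ker_invMulVecQuot hC).symm).trans <|
    C.invMulVecQuot.quotKerEquivRange.trans (LinearEquiv.ofEq _ _ (range_invMulVecQuot hC))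

end Matrix

section StarDual

variable {R : Type*} [CommRing R] [StarRing R] {N : Type*} [AddCommGroup N] [Module R N]
  {ι κ : Type*} [Fintype ι] [Fintype κ] [DecidableEq κ]

def Fintype.starLinearCombination (v : ι → N) : (ι → R) →ₛₗ[starRingEnd R] N where
  toFun w := ∑ i, star (w i) • v i
  map_add' w w' := by simp [add_smul, Finset.sum_add_distrib]
  map_smul' r w := by simp [Finset.smul_sum, mul_smul, starRingEnd_apply]

theorem Fintype.starLinearCombination_apply (v : ι → N) (w : ι → R) :
    Fintype.starLinearCombination v w = ∑ i, star (w i) • v i :=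
  rfl

@[simp]
theorem Fintype.starLinearCombination_single [DecidableEq ι] (v : ι → N) (i : ι) :
    Fintype.starLinearCombination v (Pi.single i (1 : R)) = v i := by
  simp [Fintype.starLinearCombination_apply, Pi.single_apply, apply_ite star]

theorem Fintype.starLinearCombination_eq_zero_iff [DecidableEq ι] (v : ι → N) :
    Fintype.starLinearCombination v = (0 : (ι → R) →ₛₗ[starRingEnd R] N) ↔ v = 0 := by
  refine ⟨fun h => funext fun i => ?_, ?_⟩
  · simpa using LinearMap.congr_fun h (Pi.single i 1)
  · rintro rfl
    ext
    simp [Fintype.starLinearCombination_apply]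

theorem Fintype.starLinearCombination_comp_toLin' (v : ι → N) (A : Matrix ι κ R) :
    Fintype.starLinearCombination v ∘ₛₗ A.toLin' =
      Fintype.starLinearCombination (Aᴴ.toLinOn N v) := by
  ext u
  simp only [LinearMap.coe_comp, Function.comp_apply, Matrix.toLin'_apply,
    Fintype.starLinearCombination_apply, Matrix.mulVec, dotProduct, star_sum, star_mul',
    Finset.sum_smul, mul_smul, Matrix.toLinOn_apply, Matrix.conjTranspose_apply, Finset.smul_sum]
  rw [Finset.sum_comm]
  exact Finset.sum_congr rfl fun _ _ => Finset.sum_congr rfl fun _ _ => smul_comm _ _ _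

theorem Matrix.range_toLin'_le_ker_starLinearCombination_iff (A : Matrix ι κ R) (v : ι → N) :
    LinearMap.range A.toLin' ≤ LinearMap.ker (Fintype.starLinearCombination v) ↔
      Aᴴ.toLinOn N v = 0 := by
  rw [LinearMap.range_le_ker_iff, Fintype.starLinearCombination_comp_toLin',
    Fintype.starLinearCombination_eq_zero_iff]

variable [DecidableEq ι]

theorem Matrix.comp_mkQ_eq_starLinearCombination (A : Matrix ι κ R)
    (f : A.cokernel →ₛₗ[starRingEnd R] N) :
    f ∘ₛₗ (LinearMap.range A.toLin').mkQ =
      Fintype.starLinearCombination fun i => f (Submodule.Quotient.mk (Pi.single i 1)) :=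
  (Pi.basisFun R ι).ext fun i => by simp

def Matrix.cokernelStarDualEval (A : Matrix ι κ R) :
    (A.cokernel →ₛₗ[starRingEnd R] N) →ₗ[R] LinearMap.ker (Aᴴ.toLinOn N) where
  toFun f := ⟨fun i => f (Submodule.Quotient.mk (Pi.single i 1)), by
    rw [LinearMap.mem_ker, ← A.range_toLin'_le_ker_starLinearCombination_iff,
      ← A.comp_mkQ_eq_starLinearCombination, LinearMap.ker_comp]
    intro y hy
    simp [(Submodule.Quotient.mk_eq_zero _).mpr hy]⟩
  map_add' _ _ := rfl
  map_smul' _ _ := rfl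

theorem Matrix.cokernelStarDualEval_bijective (A : Matrix ι κ R) :
    Function.Bijective (A.cokernelStarDualEval (N := N)) := by
  refine ⟨fun f f' h => Submodule.linearMap_qext _ ?_, fun ⟨v, hv⟩ => ?_⟩
  · rw [A.comp_mkQ_eq_starLinearCombination, A.comp_mkQ_eq_starLinearCombination]
    exact congr_arg _ (Subtype.ext_iff.mp h)
  · refine ⟨Submodule.liftQ _ (Fintype.starLinearCombination v)
      ((A.range_toLin'_le_ker_starLinearCombination_iff v).mpr hv),
      Subtype.ext (funext fun i => ?_)⟩
    simp [Matrix.cokernelStarDualEval]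

end StarDual

namespace LinearMap

variable {R : Type*} [CommRing R] [StarRing R] {M N X : Type*} [AddCommGroup M] [Module R M]
  [AddCommGroup N] [Module R N] [AddCommGroup X] [Module R X]
  {B : M →ₗ[R] M →ₛₗ[starRingEnd R] N}

def IsMetaboliser (B : M →ₗ[R] M →ₛₗ[starRingEnd R] N) (P : Submodule R M) : Prop :=
  ∀ x, x ∈ P ↔ ∀ y ∈ P, B x y = 0

theorem IsMetaboliser.ker_compl₂ {P : Submodule R M} (hP : B.IsMetaboliser P)
    {i : X →ₗ[R] M} (hi : LinearMap.range i = P) : LinearMap.ker (B.compl₂ i) = P := by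
  ext x
  rw [LinearMap.mem_ker, hP x, ← hi]
  simp [LinearMap.ext_iff]

theorem compl₂_surjective_of_smul_surjective [IsPrincipalIdealRing R]
    (hB : Function.Surjective B)
    (hN : ∀ a : R, a ≠ 0 → Function.Surjective fun d : N => a • d)
    {i : X →ₗ[R] M} (hi : Function.Injective i) : Function.Surjective (B.compl₂ i) := by
  intro f
  obtain ⟨F, rfl⟩ := exists_extension_of_smul_surjective hN i hi f
  obtain ⟨x, rfl⟩ := hB F
  exact ⟨x, rfl⟩

noncomputable def IsMetaboliser.quotEquiv [IsPrincipalIdealRing R]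
    {P : Submodule R M} (hP : B.IsMetaboliser P) (hB : Function.Surjective B)
    (hN : ∀ a : R, a ≠ 0 → Function.Surjective fun d : N => a • d) {i : X →ₗ[R] M}
    (hi_inj : Function.Injective i) (hi : LinearMap.range i = P) :
    (M ⧸ P) ≃ₗ[R] (X →ₛₗ[starRingEnd R] N) :=
  (Submodule.quotEquivOfEq _ _ (hP.ker_compl₂ hi).symm).trans
    ((B.compl₂ i).quotKerEquivOfSurjective (compl₂_surjective_of_smul_surjective hB hN hi_inj))

end LinearMap

theorem order_is_norm_of_metabolic_general
    (R : Type*) [CommRing R] [StarRing R] [IsDomain R] [IsPrincipalIdealRing R]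
    (M : Type*) [AddCommGroup M] [Module R M]
    (htor : Module.IsTorsion R M)
    (B : M → M → ((FractionRing R) ⧸ LinearMap.range (Algebra.linearMap R (FractionRing R))))
    (haddl : ∀ x x' y, B (x + x') y = B x y + B x' y)
    (haddr : ∀ x y y', B x (y + y') = B x y + B x y')
    (hsmull : ∀ (r : R) x y, B (r • x) y = r • B x y)
    (hsmulr : ∀ (s : R) x y, B x (s • y) = (star s) • B x y)
    (hsurj : ∀ f : M →ₛₗ[starRingEnd R]
        ((FractionRing R) ⧸ LinearMap.range (Algebra.linearMap R (FractionRing R))),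
        ∃ x, ∀ y, B x y = f y)
    (P : Submodule R M)
    (hP : ∀ x, x ∈ P ↔ ∀ y ∈ P, B x y = 0)
    -- a square presentation matrix for M, whose determinant is ord(M):
    (n : ℕ) (A : Matrix (Fin n) (Fin n) R)
    (presM : ((Fin n → R) ⧸ LinearMap.range (Matrix.toLin' A)) ≃ₗ[R] M)
    -- a square presentation matrix for P, whose determinant is ord(P):
    (m : ℕ) (A' : Matrix (Fin m) (Fin m) R)
    (presP : ((Fin m → R) ⧸ LinearMap.range (Matrix.toLin' A')) ≃ₗ[R] P) :
    Associated A.det (A'.det * star A'.det) ∧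
      ∃ f : R, Associated A.det (f * star f) := by
  let B' : M →ₗ[R] M →ₛₗ[starRingEnd R] FractionRingQuot R :=
    LinearMap.mk₂'ₛₗ (RingHom.id R) (starRingEnd R) B haddl hsmull haddr hsmulr
  have hB' : Function.Surjective B' := fun f => (hsurj f).imp fun _ => LinearMap.ext
  have hP' : B'.IsMetaboliser P := hP
  let i : A'.cokernel →ₗ[R] M := P.subtype ∘ₗ presP
  have hi_inj : Function.Injective i := P.injective_subtype.comp presP.injective
  have hi : LinearMap.range i = P := by
    rw [LinearMap.range_comp_of_range_eq_top _ presP.range, Submodule.range_subtype]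
  have hdet : A'.det ≠ 0 := Matrix.det_ne_zero_of_injective_cokernel htor i hi_inj
  have hdet_star : A'ᴴ.det ≠ 0 := by rwa [Matrix.det_conjTranspose, star_ne_zero]
  let eQ : (M ⧸ P) ≃ₗ[R] A'ᴴ.cokernel :=
    (hP'.quotEquiv hB' (fun _ => FractionRingQuot.smul_surjective) hi_inj hi).trans <|
      (LinearEquiv.ofBijective _ A'.cokernelStarDualEval_bijective).trans
        (Matrix.cokernelEquivKerToLinOn hdet_star).symm
  obtain ⟨D, ⟨e⟩⟩ := Matrix.exists_fromBlocks_cokernel_equiv P A' A'ᴴ presP eQ.symm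
  have h := Matrix.det_associated_of_cokernel_equiv A _ (presM.trans e.symm)
  rw [Matrix.det_fromBlocks_zero₂₁, Matrix.det_conjTranspose] at h
  exact ⟨h, _, h⟩

theorem order_is_norm_of_metabolic
    (R : Type*) [CommRing R] [StarRing R] [IsDomain R] [IsPrincipalIdealRing R]
    (M : Type*) [AddCommGroup M] [Module R M] [Module.Finite R M]
    (htor : Module.IsTorsion R M)
    (B : M → M → ((FractionRing R) ⧸ LinearMap.range (Algebra.linearMap R (FractionRing R))))
    (haddl : ∀ x x' y, B (x + x') y = B x y + B x' y)
    (haddr : ∀ x y y', B x (y + y') = B x y + B x y')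
    (hsmull : ∀ (r : R) x y, B (r • x) y = r • B x y)
    (hsmulr : ∀ (s : R) x y, B x (s • y) = (star s) • B x y)
    (hinj : ∀ x, (∀ y, B x y = 0) → x = 0)
    (hsurj : ∀ f : M →ₛₗ[starRingEnd R]
        ((FractionRing R) ⧸ LinearMap.range (Algebra.linearMap R (FractionRing R))),
        ∃ x, ∀ y, B x y = f y)
    (P : Submodule R M)
    (hP : ∀ x, x ∈ P ↔ ∀ y ∈ P, B x y = 0)
    -- a square presentation matrix for M, whose determinant is ord(M):
    (n : ℕ) (A : Matrix (Fin n) (Fin n) R)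
    (presM : ((Fin n → R) ⧸ LinearMap.range (Matrix.toLin' A)) ≃ₗ[R] M)
    -- a square presentation matrix for P, whose determinant is ord(P):
    (m : ℕ) (A' : Matrix (Fin m) (Fin m) R)
    (presP : ((Fin m → R) ⧸ LinearMap.range (Matrix.toLin' A')) ≃ₗ[R] P) :
    Associated A.det (A'.det * star A'.det) ∧
      ∃ f : R, Associated A.det (f * star f) :=
  order_is_norm_of_metabolic_general R M htor B haddl haddr hsmull hsmulr hsurj P hP n A presM m A'
    presP
end
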